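/- Let σ be an involution on a finite-dimensional Hilbert space and |ψ⟩ a unit vector. With RBM parameters W = (1/2)arccos(e^{-2|κ|}), b = sign(κ)W, the post-selection success probability P_s = ⟨ψ|cos²(Wσ + bI)|ψ⟩ equals 1 - (1 - e^{-4|κ|})α, where α = ⟨ψ|P_s^{(+)}|ψ⟩ with P_s^{(+)} = (I + sign(κ)σ)/2 the projector onto the sign(κ)-eigenspace of σ. -/

import Mathlib

/-! Since `σ² = I`, the square of `cos(Wσ + bI) = c I + s σ` is again affine in `σ`, with the
coefficients `(cos²(b+W) ± cos²(b-W))/2` given by the scalar functional calculus. The choice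
`b = sign(κ) W` makes one of `cos(b ± W)` equal to `1` and the other `cos(2W) = e^{-2|κ|}`. -/

open Matrix

/-- RBM weight `W(κ) = (1/2) arccos(e^{-2|κ|})`. -/
noncomputable def Wparam (κ : ℝ) : ℝ := Real.arccos (Real.exp (-2 * |κ|)) / 2

/-- RBM bias `b(κ) = sign(κ) W(κ)`. -/
noncomputable def bparam (κ : ℝ) : ℝ := Real.sign κ * Wparam κ

/-- `cos(Wσ + bI)` for an involution `σ`, via functional calculus:
since `σ² = I`, `f(Wσ+bI) = ((f(b+W)+f(b-W))/2) I + ((f(b+W)-f(b-W))/2) σ`. -/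
noncomputable def opCos {d : ℕ} (W b : ℝ) (σ : Matrix (Fin d) (Fin d) ℂ) :
    Matrix (Fin d) (Fin d) ℂ :=
  (((Real.cos (b + W) + Real.cos (b - W)) / 2 : ℝ) : ℂ) • (1 : Matrix (Fin d) (Fin d) ℂ) +
    (((Real.cos (b + W) - Real.cos (b - W)) / 2 : ℝ) : ℂ) • σ

theorem smul_one_add_smul_mul_self_of_mul_self_eq_one {R A : Type*} [CommSemiring R]
    [Semiring A] [Algebra R A] {σ : A} (hσ : σ * σ = 1) (a c : R) :
    (a • (1 : A) + c • σ) * (a • 1 + c • σ) = (a ^ 2 + c ^ 2) • (1 : A) + (2 * a * c) • σ := by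
  simp only [add_mul, mul_add, smul_mul_assoc, mul_smul_comm, hσ, one_mul, mul_one]
  module

theorem opCos_mul_self {d : ℕ} (W b : ℝ) {σ : Matrix (Fin d) (Fin d) ℂ} (hσ : σ * σ = 1) :
    opCos W b σ * opCos W b σ =
      (((Real.cos (b + W) ^ 2 + Real.cos (b - W) ^ 2) / 2 : ℝ) : ℂ) • 1 +
        (((Real.cos (b + W) ^ 2 - Real.cos (b - W) ^ 2) / 2 : ℝ) : ℂ) • σ := by
  rw [opCos, smul_one_add_smul_mul_self_of_mul_self_eq_one hσ]
  congr 2 <;> push_cast <;> ring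

theorem cos_two_mul_Wparam (κ : ℝ) : Real.cos (2 * Wparam κ) = Real.exp (-2 * |κ|) := by
  have hle : Real.exp (-2 * |κ|) ≤ 1 := Real.exp_le_one_iff.mpr (by linarith [abs_nonneg κ])
  rw [Wparam, mul_div_cancel₀ _ two_ne_zero,
    Real.cos_arccos (by linarith [Real.exp_pos (-2 * |κ|)]) hle]

theorem Wparam_zero : Wparam 0 = 0 := by
  simp [Wparam]

theorem exp_neg_four_mul_abs (κ : ℝ) : Real.exp (-4 * |κ|) = Real.exp (-2 * |κ|) ^ 2 := by
  rw [← Real.exp_nat_mul]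
  ring_nf

theorem bparam_of_pos {κ : ℝ} (h : 0 < κ) : bparam κ = Wparam κ := by
  simp [bparam, Real.sign_of_pos h]

theorem bparam_of_neg {κ : ℝ} (h : κ < 0) : bparam κ = -Wparam κ := by
  simp [bparam, Real.sign_of_neg h]

theorem cos_bparam_add_Wparam_sq_add_sq (κ : ℝ) :
    Real.cos (bparam κ + Wparam κ) ^ 2 + Real.cos (bparam κ - Wparam κ) ^ 2 =
      1 + Real.exp (-4 * |κ|) := by
  rw [exp_neg_four_mul_abs, ← cos_two_mul_Wparam]
  rcases lt_trichotomy κ 0 with h | rfl | h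
  · rw [bparam_of_neg h, neg_add_cancel, show -Wparam κ - Wparam κ = -(2 * Wparam κ) by ring,
      Real.cos_neg, Real.cos_zero]
    ring
  · simp [bparam, Wparam_zero]
  · rw [bparam_of_pos h, sub_self, ← two_mul, Real.cos_zero]
    ring

theorem cos_bparam_add_Wparam_sq_sub_sq (κ : ℝ) :
    Real.cos (bparam κ + Wparam κ) ^ 2 - Real.cos (bparam κ - Wparam κ) ^ 2 =
      -(Real.sign κ * (1 - Real.exp (-4 * |κ|))) := by
  rw [exp_neg_four_mul_abs, ← cos_two_mul_Wparam]
  rcases lt_trichotomy κ 0 with h | rfl | h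
  · rw [bparam_of_neg h, neg_add_cancel, show -Wparam κ - Wparam κ = -(2 * Wparam κ) by ring,
      Real.cos_neg, Real.cos_zero, Real.sign_of_neg h]
    ring
  · simp [bparam]
  · rw [bparam_of_pos h, sub_self, ← two_mul, Real.cos_zero, Real.sign_of_pos h]
    ring

theorem rbm_success_probability_general {d : ℕ} (κ : ℝ)
    (σ : Matrix (Fin d) (Fin d) ℂ) (hinv : σ * σ = 1)
    (ψ : Fin d → ℂ) (hψ : star ψ ⬝ᵥ ψ = 1) :
    star ψ ⬝ᵥ ((opCos (Wparam κ) (bparam κ) σ * opCos (Wparam κ) (bparam κ) σ) *ᵥ ψ) =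
      1 - ((1 - Real.exp (-4 * |κ|) : ℝ) : ℂ) *
        (star ψ ⬝ᵥ (((2 : ℂ)⁻¹ •
          ((1 : Matrix (Fin d) (Fin d) ℂ) + ((Real.sign κ : ℝ) : ℂ) • σ)) *ᵥ ψ)) := by
  rw [opCos_mul_self _ _ hinv, cos_bparam_add_Wparam_sq_add_sq, cos_bparam_add_Wparam_sq_sub_sq]
  simp only [add_mulVec, smul_mulVec, one_mulVec, smul_add, dotProduct_add, dotProduct_smul,
    smul_eq_mul, hψ]
  push_cast
  ring

/-- Success probability `P_s = ⟨ψ|cos²(Wσ+bI)|ψ⟩ = 1 - (1 - e^{-4|κ|}) α`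
with `α = ⟨ψ|(I + sign(κ)σ)/2|ψ⟩`. -/
theorem rbm_success_probability {d : ℕ} (κ : ℝ) (hκ : κ ≠ 0)
    (σ : Matrix (Fin d) (Fin d) ℂ) (hherm : σ.IsHermitian) (hinv : σ * σ = 1)
    (ψ : Fin d → ℂ) (hψ : star ψ ⬝ᵥ ψ = 1) :
    star ψ ⬝ᵥ ((opCos (Wparam κ) (bparam κ) σ * opCos (Wparam κ) (bparam κ) σ) *ᵥ ψ) =
      1 - ((1 - Real.exp (-4 * |κ|) : ℝ) : ℂ) *
        (star ψ ⬝ᵥ (((2 : ℂ)⁻¹ •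
          ((1 : Matrix (Fin d) (Fin d) ℂ) + ((Real.sign κ : ℝ) : ℂ) • σ)) *ᵥ ψ)) :=
  rbm_success_probability_general κ σ hinv ψ hψ
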